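/- Let $k$ be a field of odd prime characteristic $p$, $d = (p+1)/2$, and $R = k[x,y,z]/(x^d + y^d - z^d)$. The triples $(x y^{d-1}, 2x^d + y^d, -y^{d-1} z)$ and $(x^d + 2y^d, x^{d-1} y, -x^{d-1} z)$ are syzygies of $(x^p, y^p, z^p)$ in $R$. -/
import Mathlib


open MvPolynomial

noncomputable def fermatIdeal3 (k : Type*) [Field k] (d : ℕ) :
    Ideal (MvPolynomial (Fin 3) k) :=
  Ideal.span {X 0 ^ d + X 1 ^ d - X 2 ^ d}

/-- `(xy^{d-1}, 2x^d + y^d, -y^{d-1}z)` and `(x^d + 2y^d, x^{d-1}y, -x^{d-1}z)` are syzygies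
of `(x^p, y^p, z^p)` in `R = k[x,y,z]/(x^d + y^d - z^d)`, `char k = p = 2d - 1`. -/
theorem stmt3 (k : Type*) [Field k] (p d : ℕ) (hp : p.Prime) (h3 : 3 ≤ p) [CharP k p]
    (hd : p = 2 * d - 1) :
    (Ideal.Quotient.mk (fermatIdeal3 k d)
      (X 0 * X 1 ^ (d - 1) * X 0 ^ p + (2 * X 0 ^ d + X 1 ^ d) * X 1 ^ p +
        -(X 1 ^ (d - 1) * X 2) * X 2 ^ p) = 0) ∧
    (Ideal.Quotient.mk (fermatIdeal3 k d)
      ((X 0 ^ d + 2 * X 1 ^ d) * X 0 ^ p + X 0 ^ (d - 1) * X 1 * X 1 ^ p +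
        -(X 0 ^ (d - 1) * X 2) * X 2 ^ p) = 0) := by
  have hd2 : 2 ≤ d := by omega
  obtain ⟨e, rfl⟩ : ∃ e, d = e + 1 := ⟨d - 1, by omega⟩
  have hpe : p = 2 * e + 1 := by omega
  subst hpe
  simp only [Nat.add_sub_cancel]
  constructor
  · rw [Ideal.Quotient.eq_zero_iff_mem, fermatIdeal3, Ideal.mem_span_singleton]
    exact ⟨X 1 ^ e * (X 0 ^ (e + 1) + X 1 ^ (e + 1) + X 2 ^ (e + 1)), by ring⟩
  · rw [Ideal.Quotient.eq_zero_iff_mem, fermatIdeal3, Ideal.mem_span_singleton]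
    exact ⟨X 0 ^ e * (X 0 ^ (e + 1) + X 1 ^ (e + 1) + X 2 ^ (e + 1)), by ring⟩
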